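/- If (c, h) ∈ X = C × H and u ∈ U, then the one-step LSTM update (c⁺, h⁺) = f((c, h), u) satisfies (c⁺, h⁺) ∈ X; that is, X is positively invariant for the LSTM dynamics under inputs in U. -/
import Mathlib


open Matrix Filter Set
open scoped ENNReal NNReal BigOperators

noncomputable section

namespace LSTMmpc

/-- The logistic sigmoid `σ(z) = 1/(1+e^{-z})`. -/
def sigmoid (z : ℝ) : ℝ := 1 / (1 + Real.exp (-z))

/-- Euclidean norm of a finite real vector. -/
def enorm {k : ℕ} (v : Fin k → ℝ) : ℝ := Real.sqrt (∑ i, v i ^ 2)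

/-- Sup (∞) norm of a finite real vector. -/
def vinf {k : ℕ} (v : Fin k → ℝ) : ℝ := ⨆ i, |v i|

/-- Spectral (ℓ²-induced) norm of a real matrix. -/
def spec {a b : ℕ} (M : Matrix (Fin a) (Fin b) ℝ) : ℝ :=
  ⨆ v : {v : Fin b → ℝ // enorm v ≤ 1}, enorm (M.mulVec v.1)

/-- Induced ∞-norm (maximum absolute row sum) of the horizontal block `[s•A, B, v]`. -/
def rowNorm3 {n m : ℕ} (s : ℝ) (A : Matrix (Fin n) (Fin m) ℝ)
    (B : Matrix (Fin n) (Fin n) ℝ) (v : Fin n → ℝ) : ℝ :=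
  ⨆ i, (∑ j, |s * A i j| + ∑ j, |B i j| + |v i|)

/-- Induced ∞-norm of the horizontal block `[s•A, B, v, C, t•D]`. -/
def rowNorm5 {n m p : ℕ} (s : ℝ) (A : Matrix (Fin n) (Fin m) ℝ)
    (B : Matrix (Fin n) (Fin n) ℝ) (v : Fin n → ℝ)
    (C : Matrix (Fin n) (Fin n) ℝ) (t : ℝ) (D : Matrix (Fin n) (Fin p) ℝ) : ℝ :=
  ⨆ i, (∑ j, |s * A i j| + ∑ j, |B i j| + |v i| + ∑ j, |C i j| + ∑ j, |t * D i j|)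

/-- Weighted norm `‖v‖_P = √(vᵀ P v)`. -/
def wnorm {k : ℕ} (P : Matrix (Fin k) (Fin k) ℝ) (v : Fin k → ℝ) : ℝ :=
  Real.sqrt (v ⬝ᵥ P.mulVec v)

/-- Minimum eigenvalue of a hermitian real matrix. -/
def lamMin {k : ℕ} (P : Matrix (Fin k) (Fin k) ℝ) (hP : P.IsHermitian) : ℝ :=
  ⨅ i, hP.eigenvalues i

/-- Maximum eigenvalue of a hermitian real matrix. -/
def lamMax {k : ℕ} (P : Matrix (Fin k) (Fin k) ℝ) (hP : P.IsHermitian) : ℝ :=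
  ⨆ i, hP.eigenvalues i

/-- Spectral radius (over `ℂ`) of a real square matrix. -/
def specRad {k : ℕ} (M : Matrix (Fin k) (Fin k) ℝ) : ℝ≥0∞ :=
  spectralRadius ℂ (M.map (fun x : ℝ => (x : ℂ)))

/-- Class `K∞` functions `[0,∞) → [0,∞)`. -/
def IsClassKInf (γ : ℝ → ℝ) : Prop :=
  ContinuousOn γ (Set.Ici 0) ∧ γ 0 = 0 ∧ StrictMonoOn γ (Set.Ici 0) ∧
    (∀ s, 0 ≤ s → 0 ≤ γ s) ∧ Tendsto γ atTop atTop

/-- Class `KL` functions. -/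
def IsClassKL (β : ℝ → ℕ → ℝ) : Prop :=
  (∀ k, ContinuousOn (fun s => β s k) (Set.Ici 0) ∧
      StrictMonoOn (fun s => β s k) (Set.Ici 0) ∧ β 0 k = 0) ∧
  (∀ s, 0 < s → StrictAnti (fun k => β s k) ∧ Tendsto (fun k => β s k) atTop (nhds 0)) ∧
  (∀ s, 0 ≤ s → ∀ k, 0 ≤ β s k)

/-- Weights of an LSTM network. -/
structure LSTM (n m p : ℕ) where
  Wf : Matrix (Fin n) (Fin m) ℝ
  Wi : Matrix (Fin n) (Fin m) ℝ
  Wc : Matrix (Fin n) (Fin m) ℝ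
  Wo : Matrix (Fin n) (Fin m) ℝ
  Uf : Matrix (Fin n) (Fin n) ℝ
  Ui : Matrix (Fin n) (Fin n) ℝ
  Uc : Matrix (Fin n) (Fin n) ℝ
  Uo : Matrix (Fin n) (Fin n) ℝ
  bf : Fin n → ℝ
  bi : Fin n → ℝ
  bc : Fin n → ℝ
  bo : Fin n → ℝ
  Wy : Matrix (Fin p) (Fin n) ℝ
  bY : Fin p → ℝ

/-- LSTM state `(c, h)`. -/
abbrev State (n : ℕ) := (Fin n → ℝ) × (Fin n → ℝ)

/-- Augmented state `(c, h, d)`. -/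
abbrev AugState (n p : ℕ) := (Fin n → ℝ) × (Fin n → ℝ) × (Fin p → ℝ)

variable {n m p : ℕ}

def stepC (S : LSTM n m p) (u : Fin m → ℝ) (c h : Fin n → ℝ) : Fin n → ℝ := fun j =>
  sigmoid ((S.Wf.mulVec u + S.Uf.mulVec h + S.bf) j) * c j +
    sigmoid ((S.Wi.mulVec u + S.Ui.mulVec h + S.bi) j) *
      Real.tanh ((S.Wc.mulVec u + S.Uc.mulVec h + S.bc) j)

def stepH (S : LSTM n m p) (u : Fin m → ℝ) (c h : Fin n → ℝ) : Fin n → ℝ := fun j =>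
  sigmoid ((S.Wo.mulVec u + S.Uo.mulVec h + S.bo) j) * Real.tanh (stepC S u c h j)

/-- One step of the LSTM dynamics `x⁺ = f(x, u)`. -/
def step (S : LSTM n m p) (x : State n) (u : Fin m → ℝ) : State n :=
  (stepC S u x.1 x.2, stepH S u x.1 x.2)

/-- Output map `g(x) = W_y h + b_y`. -/
def out (S : LSTM n m p) (x : State n) : Fin p → ℝ := S.Wy.mulVec x.2 + S.bY

/-- LSTM trajectory. -/
def traj (S : LSTM n m p) (x0 : State n) (u : ℕ → Fin m → ℝ) : ℕ → State n
  | 0 => x0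
  | k + 1 => step S (traj S x0 u k) (u k)

def sFb (S : LSTM n m p) (umax : ℝ) : ℝ := sigmoid (rowNorm3 umax S.Wf S.Uf S.bf)
def sIb (S : LSTM n m p) (umax : ℝ) : ℝ := sigmoid (rowNorm3 umax S.Wi S.Ui S.bi)
def sOb (S : LSTM n m p) (umax : ℝ) : ℝ := sigmoid (rowNorm3 umax S.Wo S.Uo S.bo)
def sCb (S : LSTM n m p) (umax : ℝ) : ℝ := Real.tanh (rowNorm3 umax S.Wc S.Uc S.bc)
def sXb (S : LSTM n m p) (umax : ℝ) : ℝ :=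
  Real.tanh (sIb S umax * sCb S umax / (1 - sFb S umax))
def alphaD (S : LSTM n m p) (umax : ℝ) : ℝ :=
  (1/4) * spec S.Uf * (sIb S umax * sCb S umax / (1 - sFb S umax)) +
    sIb S umax * spec S.Uc + (1/4) * spec S.Ui * sCb S umax
def betaD (S : LSTM n m p) (umax : ℝ) : ℝ :=
  (1/4) * spec S.Wf * (sIb S umax * sCb S umax / (1 - sFb S umax)) +
    sIb S umax * spec S.Wc + (1/4) * spec S.Wi * sCb S umax
def Adelta (S : LSTM n m p) (umax : ℝ) : Matrix (Fin 2) (Fin 2) ℝ :=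
  !![sFb S umax, alphaD S umax;
     sOb S umax * sFb S umax, alphaD S umax * sOb S umax + (1/4) * sXb S umax * spec S.Uo]
def Bdelta (S : LSTM n m p) (umax : ℝ) : Fin 2 → ℝ :=
  ![betaD S umax, betaD S umax * sOb S umax + (1/4) * sXb S umax * spec S.Wo]

def setU (m : ℕ) (umax : ℝ) : Set (Fin m → ℝ) := {u | vinf u ≤ umax}
def setH (n : ℕ) : Set (Fin n → ℝ) := {h | vinf h ≤ 1}
def setC (S : LSTM n m p) (umax : ℝ) : Set (Fin n → ℝ) :=
  {c | vinf c ≤ sIb S umax * sCb S umax / (1 - sFb S umax)}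
def setX (S : LSTM n m p) (umax : ℝ) : Set (State n) := (setC S umax) ×ˢ (setH n)
def setD (p : ℕ) (dmax : ℝ) : Set (Fin p → ℝ) := {d | vinf d ≤ dmax}

/-- Euclidean norm of the full state. -/
def xnorm {n : ℕ} (x : State n) : ℝ := Real.sqrt (∑ i, x.1 i ^ 2 + ∑ i, x.2 i ^ 2)

/-- Euclidean norm of the augmented state. -/
def chinorm {n p : ℕ} (χ : AugState n p) : ℝ :=
  Real.sqrt (∑ i, χ.1 i ^ 2 + ∑ i, χ.2.1 i ^ 2 + ∑ i, χ.2.2 i ^ 2)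

/-- Incremental input-to-state stability of the LSTM in `X` and `U`. -/
def deltaISS (S : LSTM n m p) (umax : ℝ) : Prop :=
  ∃ β γ, IsClassKL β ∧ IsClassKInf γ ∧
    ∀ (k : ℕ) (xa0 xb0 : State n), xa0 ∈ setX S umax → xb0 ∈ setX S umax →
      ∀ ua ub : ℕ → Fin m → ℝ,
        (∀ h < k, ua h ∈ setU m umax) → (∀ h < k, ub h ∈ setU m umax) →
        xnorm (traj S xa0 ua k - traj S xb0 ub k) ≤
          β (xnorm (xa0 - xb0)) k + γ (⨆ h ∈ Finset.range k, enorm (ua h - ub h))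

/-- Observer gains. -/
structure Gains (n p : ℕ) where
  Lf : Matrix (Fin n) (Fin p) ℝ
  Li : Matrix (Fin n) (Fin p) ℝ
  Lo : Matrix (Fin n) (Fin p) ℝ
  Ld : Matrix (Fin p) (Fin p) ℝ

/-- Componentwise saturation to `[-dmax, dmax]`. -/
def sat {p : ℕ} (dmax : ℝ) (v : Fin p → ℝ) : Fin p → ℝ := fun j =>
  min (max (v j) (-dmax)) dmax

/-- Observer output `ŷ = W_y ĥ + b_y + d̂`. -/
def yhat (S : LSTM n m p) (hh : Fin n → ℝ) (dh : Fin p → ℝ) : Fin p → ℝ :=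
  S.Wy.mulVec hh + S.bY + dh

def obsC (S : LSTM n m p) (G : Gains n p) (u : Fin m → ℝ) (y : Fin p → ℝ)
    (ch hh : Fin n → ℝ) (dh : Fin p → ℝ) : Fin n → ℝ := fun j =>
  sigmoid ((S.Wf.mulVec u + S.Uf.mulVec hh + S.bf + G.Lf.mulVec (y - yhat S hh dh)) j) * ch j +
    sigmoid ((S.Wi.mulVec u + S.Ui.mulVec hh + S.bi + G.Li.mulVec (y - yhat S hh dh)) j) *
      Real.tanh ((S.Wc.mulVec u + S.Uc.mulVec hh + S.bc) j)

def obsH (S : LSTM n m p) (G : Gains n p) (u : Fin m → ℝ) (y : Fin p → ℝ)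
    (ch hh : Fin n → ℝ) (dh : Fin p → ℝ) : Fin n → ℝ := fun j =>
  sigmoid ((S.Wo.mulVec u + S.Uo.mulVec hh + S.bo + G.Lo.mulVec (y - yhat S hh dh)) j) *
    Real.tanh (obsC S G u y ch hh dh j)

def obsD (S : LSTM n m p) (G : Gains n p) (dmax : ℝ) (y : Fin p → ℝ)
    (hh : Fin n → ℝ) (dh : Fin p → ℝ) : Fin p → ℝ :=
  sat dmax (dh + G.Ld.mulVec (y - yhat S hh dh))

/-- One step of the observer. -/
def obsStep (S : LSTM n m p) (G : Gains n p) (dmax : ℝ) (u : Fin m → ℝ) (y : Fin p → ℝ)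
    (χ : AugState n p) : AugState n p :=
  (obsC S G u y χ.1 χ.2.1 χ.2.2, obsH S G u y χ.1 χ.2.1 χ.2.2, obsD S G dmax y χ.2.1 χ.2.2)

/-- Observer trajectory. -/
def obsTraj (S : LSTM n m p) (G : Gains n p) (dmax : ℝ) (u : ℕ → Fin m → ℝ)
    (y : ℕ → Fin p → ℝ) (χ0 : AugState n p) : ℕ → AugState n p
  | 0 => χ0
  | k + 1 => obsStep S G dmax (u k) (y k) (obsTraj S G dmax u y χ0 k)

def sFh (S : LSTM n m p) (G : Gains n p) (umax dmax : ℝ) : ℝ :=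
  sigmoid (rowNorm5 umax S.Wf (S.Uf - G.Lf * S.Wy) S.bf (G.Lf * S.Wy) (2 * dmax) G.Lf)
def sIh (S : LSTM n m p) (G : Gains n p) (umax dmax : ℝ) : ℝ :=
  sigmoid (rowNorm5 umax S.Wi (S.Ui - G.Li * S.Wy) S.bi (G.Li * S.Wy) (2 * dmax) G.Li)
def sOh (S : LSTM n m p) (G : Gains n p) (umax dmax : ℝ) : ℝ :=
  sigmoid (rowNorm5 umax S.Wo (S.Uo - G.Lo * S.Wy) S.bo (G.Lo * S.Wy) (2 * dmax) G.Lo)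
def alphaH (S : LSTM n m p) (G : Gains n p) (umax : ℝ) : ℝ :=
  (1/4) * (sIb S umax * sCb S umax / (1 - sFb S umax)) * spec (S.Uf - G.Lf * S.Wy) +
    sIb S umax * spec S.Uc + (1/4) * sCb S umax * spec (S.Ui - G.Li * S.Wy)
def betaH (S : LSTM n m p) (G : Gains n p) (umax : ℝ) : ℝ :=
  (1/4) * (sIb S umax * sCb S umax / (1 - sFb S umax)) * spec G.Lf +
    (1/4) * sCb S umax * spec G.Li
def gammaH (S : LSTM n m p) (G : Gains n p) (umax dmax : ℝ) : ℝ :=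
  sOh S G umax dmax * alphaH S G umax + (1/4) * sXb S umax * spec (S.Uo - G.Lo * S.Wy)
def Ad (S : LSTM n m p) (G : Gains n p) (umax dmax : ℝ) : Matrix (Fin 3) (Fin 3) ℝ :=
  !![sFh S G umax dmax, alphaH S G umax, betaH S G umax;
     sOh S G umax dmax * sFh S G umax dmax, gammaH S G umax dmax,
       sOh S G umax dmax * betaH S G umax + (1/4) * sXb S umax * spec G.Lo;
     0, spec (G.Ld * S.Wy), spec ((1 : Matrix (Fin p) (Fin p) ℝ) - G.Ld)]

def setChat (S : LSTM n m p) (G : Gains n p) (umax dmax : ℝ) : Set (Fin n → ℝ) :=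
  {c | vinf c ≤ sIh S G umax dmax * sCb S umax / (1 - sFh S G umax dmax)}
def setIhat (S : LSTM n m p) (G : Gains n p) (umax dmax : ℝ) : Set (AugState n p) :=
  (setChat S G umax dmax) ×ˢ ((setH n) ×ˢ (setD p dmax))

/-- Incremental Lyapunov function for the LSTM. -/
def Vs {n : ℕ} (Ps : Matrix (Fin 2) (Fin 2) ℝ) (xa xb : State n) : ℝ :=
  wnorm Ps ![enorm (xa.1 - xb.1), enorm (xa.2 - xb.2)]

/-- Lyapunov function for the observer estimation error. -/
def Vo {n p : ℕ} (Po : Matrix (Fin 3) (Fin 3) ℝ) (χh χ : AugState n p) : ℝ :=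
  wnorm Po ![enorm (χh.1 - χ.1), enorm (χh.2.1 - χ.2.1), enorm (χh.2.2 - χ.2.2)]

/-- Disturbance-augmented LSTM update applied to the observer state. -/
def faug (S : LSTM n m p) (χ : AugState n p) (u : Fin m → ℝ) : AugState n p :=
  (stepC S u χ.1 χ.2.1, stepH S u χ.1 χ.2.1, χ.2.2)

def alphaBar (S : LSTM n m p) (G : Gains n p) (umax dmax : ℝ) : ℝ :=
  (1/4) * (sIh S G umax dmax * sCb S umax / (1 - sFh S G umax dmax)) * spec (G.Lf * S.Wy) +
    (1/4) * sCb S umax * spec (G.Li * S.Wy)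
def betaBar (S : LSTM n m p) (G : Gains n p) (umax dmax : ℝ) : ℝ :=
  (1/4) * (sIh S G umax dmax * sCb S umax / (1 - sFh S G umax dmax)) * spec G.Lf +
    (1/4) * sCb S umax * spec G.Li
def gammaBar (S : LSTM n m p) (G : Gains n p) (umax dmax : ℝ) : ℝ :=
  (1/4) * Real.tanh (sIh S G umax dmax * sCb S umax / (1 - sFh S G umax dmax))
def Lmat (S : LSTM n m p) (G : Gains n p) (umax dmax : ℝ) : Matrix (Fin 3) (Fin 3) ℝ :=
  !![0, alphaBar S G umax dmax, betaBar S G umax dmax;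
     0, gammaBar S G umax dmax * spec (G.Lo * S.Wy) + sOb S umax * alphaBar S G umax dmax,
       gammaBar S G umax dmax * spec G.Lo + sOb S umax * betaBar S G umax dmax;
     0, spec (G.Ld * S.Wy), spec G.Ld]


lemma sigmoid_pos (z : ℝ) : 0 < sigmoid z := by
  unfold sigmoid; positivity

lemma sigmoid_lt_one (z : ℝ) : sigmoid z < 1 := by
  unfold sigmoid
  rw [div_lt_one (by positivity)]
  linarith [Real.exp_pos (-z)]

lemma sigmoid_mono : Monotone sigmoid := by
  intro a b hab
  unfold sigmoid
  apply one_div_le_one_div_of_le (by positivity)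
  have : Real.exp (-b) ≤ Real.exp (-a) := Real.exp_le_exp.2 (by linarith)
  linarith

lemma tanh_mono : Monotone Real.tanh := by
  intro a b hab
  have h1 : Real.sinh (a - b) ≤ 0 := by
    have := Real.sinh_strictMono.monotone (show a - b ≤ 0 by linarith)
    rwa [Real.sinh_zero] at this
  rw [Real.sinh_sub] at h1
  rw [Real.tanh_eq_sinh_div_cosh, Real.tanh_eq_sinh_div_cosh,
    div_le_div_iff₀ (Real.cosh_pos a) (Real.cosh_pos b)]
  linarith

lemma tanh_nonneg {z : ℝ} (hz : 0 ≤ z) : 0 ≤ Real.tanh z := by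
  have := tanh_mono hz
  rwa [Real.tanh_zero] at this

lemma abs_tanh_le_tanh_abs (z : ℝ) : |Real.tanh z| ≤ Real.tanh |z| := by
  rcases abs_cases z with ⟨h, _⟩ | ⟨h, _⟩
  · rw [abs_le]
    refine ⟨?_, tanh_mono (le_abs_self z)⟩
    have h2 : -|z| ≤ z := neg_abs_le z
    have := tanh_mono h2
    rw [Real.tanh_neg] at this
    linarith
  · rw [abs_le]
    refine ⟨?_, tanh_mono (le_abs_self z)⟩
    have h2 : -|z| ≤ z := neg_abs_le z
    have := tanh_mono h2
    rw [Real.tanh_neg] at this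
    linarith

lemma abs_tanh_le_one (z : ℝ) : |Real.tanh z| ≤ 1 := by
  rw [abs_le, Real.tanh_eq_sinh_div_cosh]
  have hc := Real.cosh_pos (x := z)
  have h1 : Real.cosh z - Real.sinh z = Real.exp (-z) := Real.cosh_sub_sinh z
  have h2 : Real.cosh z + Real.sinh z = Real.exp z := by
    have := Real.sinh_add_cosh z; linarith
  have e1 := Real.exp_pos (-z)
  have e2 := Real.exp_pos z
  constructor
  · rw [le_div_iff₀ hc]; linarith
  · rw [div_le_one hc]; linarith

lemma abs_le_vinf {k : ℕ} (v : Fin k → ℝ) (j : Fin k) : |v j| ≤ vinf v := by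
  unfold vinf
  exact le_ciSup (f := fun i => |v i|) (Set.Finite.bddAbove (Set.finite_range _)) j

lemma vinf_le {k : ℕ} {v : Fin k → ℝ} {a : ℝ} (h : ∀ j, |v j| ≤ a) (ha : 0 ≤ a) :
    vinf v ≤ a :=
  Real.iSup_le h ha

lemma rowNorm3_nonneg {n m : ℕ} (s : ℝ) (A : Matrix (Fin n) (Fin m) ℝ)
    (B : Matrix (Fin n) (Fin n) ℝ) (v : Fin n → ℝ) : 0 ≤ rowNorm3 s A B v :=
  Real.iSup_nonneg fun i => by positivity

lemma arg_bound {n m : ℕ} (W : Matrix (Fin n) (Fin m) ℝ) (U : Matrix (Fin n) (Fin n) ℝ)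
    (b : Fin n → ℝ) {umax : ℝ} (hup : 0 ≤ umax) {u : Fin m → ℝ} (hu : vinf u ≤ umax)
    {h : Fin n → ℝ} (hh : vinf h ≤ 1) (j : Fin n) :
    |(W.mulVec u + U.mulVec h + b) j| ≤ rowNorm3 umax W U b := by
  have hU : ∀ k, |u k| ≤ umax := fun k => (abs_le_vinf u k).trans hu
  have hH : ∀ k, |h k| ≤ 1 := fun k => (abs_le_vinf h k).trans hh
  have h1 : |(W.mulVec u) j| ≤ ∑ k, |umax * W j k| := by
    simp only [Matrix.mulVec, dotProduct]
    refine (Finset.abs_sum_le_sum_abs _ _).trans (Finset.sum_le_sum fun k _ => ?_)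
    rw [abs_mul, abs_mul, abs_of_nonneg hup, mul_comm umax]
    exact mul_le_mul_of_nonneg_left (hU k) (abs_nonneg _)
  have h2 : |(U.mulVec h) j| ≤ ∑ k, |U j k| := by
    simp only [Matrix.mulVec, dotProduct]
    refine (Finset.abs_sum_le_sum_abs _ _).trans (Finset.sum_le_sum fun k _ => ?_)
    rw [abs_mul]
    calc |U j k| * |h k| ≤ |U j k| * 1 := mul_le_mul_of_nonneg_left (hH k) (abs_nonneg _)
      _ = |U j k| := mul_one _
  have h3 : (∑ k, |umax * W j k| + ∑ k, |U j k| + |b j|) ≤ rowNorm3 umax W U b := by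
    unfold rowNorm3
    exact le_ciSup (Set.Finite.bddAbove (Set.finite_range
      (fun i => ∑ k, |umax * W i k| + ∑ k, |U i k| + |b i|))) j
  calc |(W.mulVec u + U.mulVec h + b) j|
      = |(W.mulVec u) j + (U.mulVec h) j + b j| := by simp [Pi.add_apply]
    _ ≤ |(W.mulVec u) j| + |(U.mulVec h) j| + |b j| := by
        calc |(W.mulVec u) j + (U.mulVec h) j + b j|
            ≤ |(W.mulVec u) j + (U.mulVec h) j| + |b j| := abs_add_le _ _
          _ ≤ |(W.mulVec u) j| + |(U.mulVec h) j| + |b j| := by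
              have := abs_add_le ((W.mulVec u) j) ((U.mulVec h) j); linarith
    _ ≤ ∑ k, |umax * W j k| + ∑ k, |U j k| + |b j| := by linarith
    _ ≤ rowNorm3 umax W U b := h3

/-- the set `X = C × H` is positively invariant for the LSTM. -/
theorem statement1 {n m p : ℕ} (S : LSTM n m p) (umax : ℝ) (hu : 0 < umax)
    (x : State n) (hx : x ∈ setX S umax) (u : Fin m → ℝ) (huU : u ∈ setU m umax) :
    step S x u ∈ setX S umax := by
  simp only [setX, Set.mem_prod, setC, setH, Set.mem_setOf_eq] at hx ⊢
  obtain ⟨hc, hh⟩ := hx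
  have huv : vinf u ≤ umax := huU
  have hf1 : sFb S umax < 1 := sigmoid_lt_one _
  have hi0 : 0 ≤ sIb S umax := (sigmoid_pos _).le
  have hi1 : sIb S umax ≤ 1 := (sigmoid_lt_one _).le
  have hcb0 : 0 ≤ sCb S umax := tanh_nonneg (rowNorm3_nonneg _ _ _ _)
  have hden : 0 < 1 - sFb S umax := by linarith
  set R : ℝ := sIb S umax * sCb S umax / (1 - sFb S umax) with hR
  have hRnn : 0 ≤ R := div_nonneg (mul_nonneg hi0 hcb0) hden.le
  have hcbound : ∀ j, |stepC S u x.1 x.2 j| ≤ R := by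
    intro j
    have hσf : sigmoid ((S.Wf.mulVec u + S.Uf.mulVec x.2 + S.bf) j) ≤ sFb S umax :=
      sigmoid_mono ((le_abs_self _).trans (arg_bound _ _ _ hu.le huv hh j))
    have hσi : sigmoid ((S.Wi.mulVec u + S.Ui.mulVec x.2 + S.bi) j) ≤ sIb S umax :=
      sigmoid_mono ((le_abs_self _).trans (arg_bound _ _ _ hu.le huv hh j))
    have htc : |Real.tanh ((S.Wc.mulVec u + S.Uc.mulVec x.2 + S.bc) j)| ≤ sCb S umax :=
      (abs_tanh_le_tanh_abs _).trans (tanh_mono (arg_bound _ _ _ hu.le huv hh j))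
    have hcj : |x.1 j| ≤ R := (abs_le_vinf _ j).trans hc
    have hσf0 := sigmoid_pos ((S.Wf.mulVec u + S.Uf.mulVec x.2 + S.bf) j)
    have hσi0 := sigmoid_pos ((S.Wi.mulVec u + S.Ui.mulVec x.2 + S.bi) j)
    have key : sFb S umax * R + sIb S umax * sCb S umax = R := by
      rw [hR]; field_simp; ring
    calc |stepC S u x.1 x.2 j|
        ≤ |sigmoid ((S.Wf.mulVec u + S.Uf.mulVec x.2 + S.bf) j) * x.1 j| +
          |sigmoid ((S.Wi.mulVec u + S.Ui.mulVec x.2 + S.bi) j) *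
            Real.tanh ((S.Wc.mulVec u + S.Uc.mulVec x.2 + S.bc) j)| := abs_add_le _ _
      _ ≤ sFb S umax * R + sIb S umax * sCb S umax := by
          rw [abs_mul, abs_mul, abs_of_pos hσf0, abs_of_pos hσi0]
          have t1 : sigmoid ((S.Wf.mulVec u + S.Uf.mulVec x.2 + S.bf) j) * |x.1 j| ≤
              sFb S umax * R := by
            apply mul_le_mul hσf hcj (abs_nonneg _) ((sigmoid_pos _).le.trans hσf)
          have t2 : sigmoid ((S.Wi.mulVec u + S.Ui.mulVec x.2 + S.bi) j) *
              |Real.tanh ((S.Wc.mulVec u + S.Uc.mulVec x.2 + S.bc) j)| ≤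
              sIb S umax * sCb S umax := by
            apply mul_le_mul hσi htc (abs_nonneg _) hi0
          linarith
      _ = R := key
  refine ⟨vinf_le hcbound hRnn, vinf_le (fun j => ?_) zero_le_one⟩
  have hσo0 := sigmoid_pos ((S.Wo.mulVec u + S.Uo.mulVec x.2 + S.bo) j)
  calc |stepH S u x.1 x.2 j|
      = sigmoid ((S.Wo.mulVec u + S.Uo.mulVec x.2 + S.bo) j) *
          |Real.tanh (stepC S u x.1 x.2 j)| := by
        rw [stepH, abs_mul, abs_of_pos hσo0]
    _ ≤ 1 * 1 :=
        mul_le_mul (sigmoid_lt_one _).le (abs_tanh_le_one _) (abs_nonneg _) zero_le_one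
    _ = 1 := mul_one 1

end LSTMmpc
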